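/- arXiv:1307.5920 — 4 statements merged into one kernel-verified Lean document; each statement's English description precedes it below -/
import Mathlib

section
/- Let (X,d) be a metric space, let f_1,…,f_N : X → X be nonexpansive maps, let C ⊆ X be a nonempty set with Φ(C) ⊆ C (Φ the Hutchinson operator), and let (x_n)_{n≥0} be an orbit of the system. Then for every point y in the omega-limit set ω((x_n)) = ⋂_{m≥0} cl{x_n : n ≥ m} one has d(y,C) = inf_n d(x_n,C); in particular the function y ↦ d(y,C) is constant on ω((x_n)). -/
/-- The omega-limit set of a sequence: the descending intersection of the
closures of the tails of the sequence. -/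
def omegaLimitSet {X : Type*} [MetricSpace X] (x : ℕ → X) : Set X :=
  ⋂ m : ℕ, closure (x '' Set.Ici m)

/-- For a nonexpansive IFS with a nonempty subinvariant set `C`,
every point `y` of the omega-limit set of an orbit satisfies
`d(y, C) = inf_n d(x_n, C)`; in particular `y ↦ d(y,C)` is constant there. -/
theorem stmt_2 {X : Type*} [MetricSpace X] {N : ℕ} (f : Fin N → X → X)
    (hf : ∀ (i : Fin N) (a b : X), dist (f i a) (f i b) ≤ dist a b)
    (C : Set X) (hCne : C.Nonempty) (hCsub : (⋃ i : Fin N, f i '' C) ⊆ C)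
    (x : ℕ → X) (σ : ℕ → Fin N) (hx : ∀ n : ℕ, x (n + 1) = f (σ n) (x n)) :
    ∀ y ∈ omegaLimitSet x, Metric.infDist y C = ⨅ n : ℕ, Metric.infDist (x n) C := by
  intro y hy
  set a : ℕ → ℝ := fun n => Metric.infDist (x n) C with ha
  have hbdd : BddBelow (Set.range a) := by
    refine ⟨0, ?_⟩
    rintro r ⟨n, rfl⟩
    exact Metric.infDist_nonneg
  -- a is nonincreasing (antitone step)
  have hstep : ∀ n, a (n + 1) ≤ a n := by
    intro n
    have himg : (f (σ n) '' C).Nonempty := hCne.image _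
    have h1 : Metric.infDist (x (n + 1)) C ≤ Metric.infDist (x (n + 1)) (f (σ n) '' C) := by
      apply Metric.infDist_le_infDist_of_subset _ himg
      intro z hz
      exact hCsub (Set.mem_iUnion.2 ⟨σ n, hz⟩)
    have h2 : Metric.infDist (x (n + 1)) (f (σ n) '' C) ≤ Metric.infDist (x n) C := by
      have : Nonempty ↥C := hCne.to_subtype
      rw [Metric.infDist_eq_iInf (s := C)]
      apply le_ciInf
      rintro ⟨c, hc⟩
      calc Metric.infDist (x (n + 1)) (f (σ n) '' C)
          ≤ dist (x (n + 1)) (f (σ n) c) :=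
            Metric.infDist_le_dist_of_mem ⟨c, hc, rfl⟩
        _ ≤ dist (x n) c := by rw [hx n]; exact hf _ _ _
    exact h1.trans h2
  have hanti : Antitone a := antitone_nat_of_succ_le hstep
  set L : ℝ := ⨅ n, a n with hL
  apply le_antisymm
  · -- infDist y C ≤ L
    refine le_of_forall_pos_le_add fun ε hε => ?_
    have hε2 : 0 < ε / 2 := by linarith
    obtain ⟨m, hm⟩ : ∃ m, a m < L + ε / 2 := by
      have : L < L + ε / 2 := by linarith
      exact exists_lt_of_ciInf_lt this
    have hyc : y ∈ closure (x '' Set.Ici m) := by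
      have := Set.mem_iInter.1 hy m
      exact this
    obtain ⟨z, hz, hdz⟩ := Metric.mem_closure_iff.1 hyc (ε / 2) hε2
    obtain ⟨n, hn, rfl⟩ := hz
    calc Metric.infDist y C ≤ a n + dist y (x n) :=
          Metric.infDist_le_infDist_add_dist
      _ ≤ a m + ε / 2 := add_le_add (hanti hn) hdz.le
      _ ≤ L + ε := by linarith
  · -- L ≤ infDist y C
    refine le_of_forall_pos_le_add fun ε hε => ?_
    have hyc : y ∈ closure (x '' Set.Ici 0) := Set.mem_iInter.1 hy 0
    obtain ⟨z, hz, hdz⟩ := Metric.mem_closure_iff.1 hyc ε hε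
    obtain ⟨n, -, rfl⟩ := hz
    calc L ≤ a n := ciInf_le hbdd n
      _ ≤ Metric.infDist y C + dist (x n) y := Metric.infDist_le_infDist_add_dist
      _ ≤ Metric.infDist y C + ε := by rw [dist_comm]; linarith
end

section
/- Let (X,d) be a metric space, let f_1,…,f_N : X → X be nonexpansive maps, and let (x_n)_{n≥0} be an orbit of the system with omega-limit set ω((x_n)) = ⋂_{m≥0} cl{x_n : n ≥ m}. If C ⊆ X is a nonempty closed subinvariant set (Φ(C) ⊆ C) that intersects the omega-limit set, i.e. C ∩ ω((x_n)) ≠ ∅, then C contains the omega-limit set: ω((x_n)) ⊆ C. -/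
/-- If a nonempty closed subinvariant set `C` of a nonexpansive IFS
intersects the omega-limit set of an orbit, then it contains the omega-limit set. -/
theorem stmt_3 {X : Type*} [MetricSpace X] {N : ℕ} (f : Fin N → X → X)
    (hf : ∀ (i : Fin N) (a b : X), dist (f i a) (f i b) ≤ dist a b)
    (x : ℕ → X) (σ : ℕ → Fin N) (hx : ∀ n : ℕ, x (n + 1) = f (σ n) (x n))
    (C : Set X) (hCne : C.Nonempty) (hCclosed : IsClosed C)
    (hCsub : (⋃ i : Fin N, f i '' C) ⊆ C)
    (hmeet : (C ∩ omegaLimitSet x).Nonempty) :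
    omegaLimitSet x ⊆ C := by
  obtain ⟨y, hyC, hyω⟩ := hmeet
  have step : ∀ n, Metric.infDist (x (n + 1)) C ≤ Metric.infDist (x n) C := by
    intro n
    by_contra h
    push_neg at h
    obtain ⟨c, hc, hcd⟩ := (Metric.infDist_lt_iff hCne).1 h
    have hfc : f (σ n) c ∈ C := hCsub (Set.mem_iUnion.2 ⟨σ n, c, hc, rfl⟩)
    have : Metric.infDist (x (n + 1)) C ≤ dist (x n) c := by
      calc Metric.infDist (x (n + 1)) C
          ≤ dist (x (n + 1)) (f (σ n) c) := Metric.infDist_le_dist_of_mem hfc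
        _ = dist (f (σ n) (x n)) (f (σ n) c) := by rw [hx n]
        _ ≤ dist (x n) c := hf _ _ _
    linarith
  have mono : ∀ m n, m ≤ n → Metric.infDist (x n) C ≤ Metric.infDist (x m) C := by
    intro m n h
    induction n with
    | zero => simp_all
    | succ k ih =>
      rcases Nat.lt_or_ge m (k + 1) with h' | h'
      · exact (step k).trans (ih (Nat.lt_succ_iff.mp h'))
      · have hm : m = k + 1 := le_antisymm h h'
        subst hm; exact le_refl _
  have key : ∀ ε > (0 : ℝ), ∃ m, ∀ n ≥ m, Metric.infDist (x n) C < ε := by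
    intro ε hε
    have hy0 : y ∈ closure (x '' Set.Ici 0) := Set.mem_iInter.mp hyω 0
    obtain ⟨p, hp, hpd⟩ := Metric.mem_closure_iff.mp hy0 ε hε
    obtain ⟨m, _, rfl⟩ := hp
    refine ⟨m, fun n hn => ?_⟩
    calc Metric.infDist (x n) C ≤ Metric.infDist (x m) C := mono m n hn
      _ ≤ dist (x m) y := Metric.infDist_le_dist_of_mem hyC
      _ < ε := by rw [dist_comm]; exact hpd
  intro z hz
  have hz0 : Metric.infDist z C = 0 := by
    refine le_antisymm ?_ Metric.infDist_nonneg
    by_contra h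
    push_neg at h
    set ε := Metric.infDist z C with hεdef
    obtain ⟨m, hm⟩ := key (ε / 2) (by linarith)
    have hzm : z ∈ closure (x '' Set.Ici m) := Set.mem_iInter.mp hz m
    obtain ⟨p, hp, hpd⟩ := Metric.mem_closure_iff.mp hzm (ε / 2) (by linarith)
    obtain ⟨n, hn, rfl⟩ := hp
    have h1 : Metric.infDist z C ≤ Metric.infDist (x n) C + dist z (x n) :=
      Metric.infDist_le_infDist_add_dist
    have h2 := hm n hn
    linarith
  exact (hCclosed.mem_iff_infDist_zero hCne).2 hz0
end

section
/- Let (X,d) be a metric space, let f_1,…,f_N : X → X be nonexpansive maps, and let (x_n)_{n≥0} be an orbit with omega-limit set ω = ⋂_{m≥0} cl{x_n : n ≥ m}. Suppose ω is invariant, i.e. Φ(ω) = ω where Φ(S) = ⋃_{i=1}^N f_i(S). Then ω is a minimal closed invariant set: every nonempty closed set S ⊆ ω with Φ(S) ⊆ S satisfies S = ω. -/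
open Set Metric

section OmegaLimitSet

variable {X α : Type*} [MetricSpace X] [TopologicalSpace α] [PartialOrder α]
  [OrderClosedTopology α] {x : ℕ → X} {g : X → α}

theorem apply_le_of_mem_omegaLimitSet (hg : Continuous g) (hgx : Antitone (g ∘ x)) {y : X}
    (hy : y ∈ omegaLimitSet x) (n : ℕ) : g y ≤ g (x n) := by
  have htail : x '' Ici n ⊆ {z | g z ≤ g (x n)} := by
    rintro _ ⟨m, hm, rfl⟩
    exact hgx hm
  exact closure_minimal htail (isClosed_le hg continuous_const) (mem_iInter.1 hy n)

theorem apply_eq_of_mem_omegaLimitSet (hg : Continuous g) (hgx : Antitone (g ∘ x)) {y z : X}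
    (hy : y ∈ omegaLimitSet x) (hz : z ∈ omegaLimitSet x) : g y = g z := by
  have key : ∀ {y z : X}, y ∈ omegaLimitSet x → z ∈ omegaLimitSet x → g y ≤ g z := by
    intro y z hy hz
    have horbit : x '' Ici 0 ⊆ {w | g y ≤ g w} := by
      rintro _ ⟨m, -, rfl⟩
      exact apply_le_of_mem_omegaLimitSet hg hgx hy m
    exact closure_minimal horbit (isClosed_le continuous_const hg) (mem_iInter.1 hz 0)
  exact le_antisymm (key hy hz) (key hz hy)

end OmegaLimitSet

theorem Metric.infDist_apply_le_of_mapsTo {X : Type*} [MetricSpace X] {g : X → X} {S : Set X}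
    (hg : ∀ a b, dist (g a) (g b) ≤ dist a b) (hgS : MapsTo g S S) (hS : S.Nonempty) (a : X) :
    infDist (g a) S ≤ infDist a S :=
  (le_infDist hS).2 fun _ hs => (infDist_le_dist_of_mem (hgS hs)).trans (hg _ _)

theorem antitone_infDist_orbit {X : Type*} [MetricSpace X] {N : ℕ} {f : Fin N → X → X}
    (hf : ∀ (i : Fin N) (a b : X), dist (f i a) (f i b) ≤ dist a b) {x : ℕ → X}
    {σ : ℕ → Fin N} (hx : ∀ n : ℕ, x (n + 1) = f (σ n) (x n))
    {S : Set X} (hfS : ∀ i, MapsTo (f i) S S) (hS : S.Nonempty) :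
    Antitone fun n => infDist (x n) S :=
  antitone_nat_of_succ_le fun n => by
    rw [hx n]
    exact infDist_apply_le_of_mapsTo (hf _) (hfS _) hS _

theorem stmt_4_general {X : Type*} [MetricSpace X] {N : ℕ} (f : Fin N → X → X)
    (hf : ∀ (i : Fin N) (a b : X), dist (f i a) (f i b) ≤ dist a b)
    (x : ℕ → X) (σ : ℕ → Fin N) (hx : ∀ n : ℕ, x (n + 1) = f (σ n) (x n)) :
    ∀ S : Set X, S ⊆ omegaLimitSet x → S.Nonempty → IsClosed S →
      (⋃ i : Fin N, f i '' S) ⊆ S → S = omegaLimitSet x := by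
  intro S hSω hSne hScl hSinv
  have hfS : ∀ i, MapsTo (f i) S S := fun i =>
    mapsTo_iff_image_subset.2 ((subset_iUnion (fun i => f i '' S) i).trans hSinv)
  have hanti := antitone_infDist_orbit hf hx hfS hSne
  obtain ⟨s, hs⟩ := hSne
  refine hSω.antisymm fun y hy => ?_
  rw [hScl.mem_iff_infDist_zero ⟨s, hs⟩,
    apply_eq_of_mem_omegaLimitSet (continuous_infDist_pt S) hanti hy (hSω hs)]
  exact infDist_zero_of_mem hs

/-- If the omega-limit set of an orbit of a nonexpansive IFS is
invariant, then it is a minimal closed invariant set: every nonempty closed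
subinvariant subset of it equals the whole omega-limit set. -/
theorem stmt_4 {X : Type*} [MetricSpace X] {N : ℕ} (f : Fin N → X → X)
    (hf : ∀ (i : Fin N) (a b : X), dist (f i a) (f i b) ≤ dist a b)
    (x : ℕ → X) (σ : ℕ → Fin N) (hx : ∀ n : ℕ, x (n + 1) = f (σ n) (x n))
    (hinv : (⋃ i : Fin N, f i '' omegaLimitSet x) = omegaLimitSet x) :
    ∀ S : Set X, S ⊆ omegaLimitSet x → S.Nonempty → IsClosed S →
      (⋃ i : Fin N, f i '' S) ⊆ S → S = omegaLimitSet x :=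
  stmt_4_general f hf x σ hx
end

section
/- Let (X,d) be a complete metric space and f_1,…,f_N : X → X nonexpansive maps such that there exists a nonempty closed bounded set C with Φ(C) ⊆ C. Let (x_n)_{n≥0} and (y_n)_{n≥0} be two orbits, starting at x_0 and y_0 respectively, whose driving sequences (i_n)_{n≥1} and (j_n)_{n≥1} are both disjunctive. Assume condition (C): there exists a finite word (u_1,…,u_l) ∈ {1,…,N}^l such that the composition f_{u_l} ∘ … ∘ f_{u_1} is a Lipschitz contraction (Lipschitz with some constant L < 1). Then the two orbits have the same omega-limit set: ω((x_n)) = ω((y_n)). -/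
/-- Apply the maps of the IFS along a word, the head of the list acting first:
`wordMap f [u₁, …, u_l] = f_{u_l} ∘ … ∘ f_{u_1}`. -/
def wordMap {X : Type*} {N : ℕ} (f : Fin N → X → X) : List (Fin N) → X → X
  | [], p => p
  | i :: w, p => wordMap f w (f i p)

/-- A sequence of symbols is disjunctive if it contains every finite word over
the alphabet as a consecutive subword. -/
def Disjunctive {N : ℕ} (σ : ℕ → Fin N) : Prop :=
  ∀ (m : ℕ) (w : Fin m → Fin N), ∃ n₀ : ℕ, ∀ j : Fin m, σ (n₀ + (j : ℕ)) = w j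

open Filter

def wordAt {α : Type*} (σ : ℕ → α) (n k : ℕ) : List α :=
  List.ofFn fun j : Fin k => σ (n + j)

theorem wordAt_eq_of_forall_get {α : Type*} (w : List α) (σ : ℕ → α) (n : ℕ)
    (h : ∀ j : Fin w.length, σ (n + j) = w.get j) : wordAt σ n w.length = w := by
  simp only [wordAt, h, List.ofFn_get]

theorem Disjunctive.exists_wordAt_eq {N : ℕ} {σ : ℕ → Fin N} (hσ : Disjunctive σ)
    (w : List (Fin N)) (M : ℕ) : ∃ n ≥ M, wordAt σ n w.length = w := by
  -- Padding `w` on the left by `M` letters forces the occurrence of `w` past position `M`.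
  set v := List.replicate M (σ 0) ++ w
  obtain ⟨n₀, hn₀⟩ := hσ v.length v.get
  refine ⟨n₀ + M, Nat.le_add_left _ _, wordAt_eq_of_forall_get w σ _ fun j => ?_⟩
  have hj : M + (j : ℕ) < v.length := by simp [v]
  rw [Nat.add_assoc, hn₀ ⟨M + j, hj⟩]
  simp [v, List.getElem_append_right]

theorem mem_omegaLimitSet_iff {X : Type*} [MetricSpace X] {x : ℕ → X} {p : X} :
    p ∈ omegaLimitSet x ↔ ∀ m, ∀ ε > 0, ∃ n ≥ m, dist p (x n) < ε := by
  simp only [omegaLimitSet, Set.mem_iInter, Metric.mem_closure_iff, Set.mem_image,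
    Set.mem_Ici, exists_exists_and_eq_and, ge_iff_le]

theorem omegaLimitSet_subset_of_eventually_close {X : Type*} [MetricSpace X] {x y : ℕ → X}
    (h : ∀ ε > 0, ∀ᶠ n' in atTop, ∀ m, ∃ n ≥ m, dist (x n') (y n) < ε) :
    omegaLimitSet x ⊆ omegaLimitSet y := by
  intro p hp
  rw [mem_omegaLimitSet_iff] at hp ⊢
  intro m ε hε
  obtain ⟨S, hS⟩ := (h (ε / 2) (half_pos hε)).exists_forall_of_atTop
  obtain ⟨n', hn', hpx⟩ := hp S (ε / 2) (half_pos hε)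
  obtain ⟨n, hn, hxy⟩ := hS n' hn' m
  exact ⟨n, hn, by linarith [dist_triangle p (x n') (y n)]⟩

section IFS

variable {X : Type*} {N : ℕ} {f : Fin N → X → X}

theorem wordMap_append (w₁ w₂ : List (Fin N)) (p : X) :
    wordMap f (w₁ ++ w₂) p = wordMap f w₂ (wordMap f w₁ p) := by
  induction w₁ generalizing p with
  | nil => rfl
  | cons i w ih => exact ih (f i p)

theorem wordMap_flatten_replicate (u : List (Fin N)) (k : ℕ) :
    wordMap f (List.replicate k u).flatten = (wordMap f u)^[k] := by
  induction k with
  | zero => rfl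
  | succ k ih =>
    funext p
    rw [List.replicate_succ, List.flatten_cons, wordMap_append, ih,
      Function.iterate_succ_apply]

variable {x : ℕ → X} {σ : ℕ → Fin N}

theorem orbit_add_eq_wordMap (hx : ∀ n, x (n + 1) = f (σ n) (x n)) (n k : ℕ) :
    x (n + k) = wordMap f (wordAt σ n k) (x n) := by
  induction k generalizing n with
  | zero => rfl
  | succ k ih =>
    rw [← Nat.add_assoc, Nat.add_right_comm, ih, hx]
    simp [wordAt, List.ofFn_succ, wordMap, Nat.add_assoc, Nat.add_comm 1]

variable [MetricSpace X]

theorem dist_wordMap_le (hf : ∀ (i : Fin N) (a b : X), dist (f i a) (f i b) ≤ dist a b)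
    (w : List (Fin N)) (a b : X) : dist (wordMap f w a) (wordMap f w b) ≤ dist a b := by
  induction w generalizing a b with
  | nil => exact le_rfl
  | cons i w ih => exact (ih (f i a) (f i b)).trans (hf i a b)

theorem isBounded_range_orbit
    (hf : ∀ (i : Fin N) (a b : X), dist (f i a) (f i b) ≤ dist a b)
    {C : Set X} (hCne : C.Nonempty) (hCbdd : Bornology.IsBounded C)
    (hCsub : (⋃ i : Fin N, f i '' C) ⊆ C) (hx : ∀ n, x (n + 1) = f (σ n) (x n)) :
    Bornology.IsBounded (Set.range x) := by
  obtain ⟨c₀, hc₀⟩ := hCne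
  -- The orbit of `c₀` under the same driving sequence stays in `C` and shadows `x`.
  have shadow : ∀ n, ∃ c ∈ C, dist (x n) c ≤ dist (x 0) c₀ := by
    intro n
    induction n with
    | zero => exact ⟨c₀, hc₀, le_rfl⟩
    | succ n ih =>
      obtain ⟨c, hc, hdist⟩ := ih
      refine ⟨f (σ n) c, hCsub (Set.mem_iUnion.2 ⟨σ n, Set.mem_image_of_mem _ hc⟩), ?_⟩
      rw [hx n]
      exact (hf _ _ _).trans hdist
  refine (hCbdd.cthickening (δ := dist (x 0) c₀)).subset ?_
  rintro _ ⟨n, rfl⟩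
  obtain ⟨c, hc, hdist⟩ := shadow n
  exact Metric.mem_cthickening_of_dist_le _ c _ _ hc hdist

theorem eventually_exists_dist_orbit_lt
    (hf : ∀ (i : Fin N) (a b : X), dist (f i a) (f i b) ≤ dist a b)
    {y : ℕ → X} {τ : ℕ → Fin N}
    (hx : ∀ n, x (n + 1) = f (σ n) (x n)) (hy : ∀ n, y (n + 1) = f (τ n) (y n))
    (hσ : Disjunctive σ) (hτ : Disjunctive τ)
    {u : List (Fin N)} {K : NNReal} (hu : LipschitzWith K (wordMap f u)) (hK : K < 1)
    {D : ℝ} (hD : ∀ a b, dist (x a) (y b) ≤ D) {ε : ℝ} (hε : 0 < ε) :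
    ∀ᶠ n' in atTop, ∀ m, ∃ n ≥ m, dist (x n') (y n) < ε := by
  have hKD : Tendsto (fun k : ℕ => (K : ℝ) ^ k * D) atTop (nhds 0) := by
    simpa using (tendsto_pow_atTop_nhds_zero_of_lt_one K.2 hK).mul_const D
  obtain ⟨k, hk⟩ := (hKD.eventually (gt_mem_nhds hε)).exists
  set v := (List.replicate k u).flatten
  obtain ⟨s, -, hs⟩ := hσ.exists_wordAt_eq v 0
  rw [eventually_atTop]
  refine ⟨s + v.length, fun n' hn' m => ?_⟩
  set t := wordAt σ (s + v.length) (n' - (s + v.length))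
  have hxn' : x n' = wordMap f (v ++ t) (x s) := by
    rw [wordMap_append, ← hs, ← orbit_add_eq_wordMap hx, ← orbit_add_eq_wordMap hx,
      Nat.add_sub_cancel' hn']
  obtain ⟨n₁, hn₁, hn₁w⟩ := hτ.exists_wordAt_eq (v ++ t) m
  refine ⟨n₁ + (v ++ t).length, le_add_right hn₁, ?_⟩
  rw [orbit_add_eq_wordMap hy, hn₁w, hxn', wordMap_append, wordMap_append]
  calc dist (wordMap f t (wordMap f v (x s))) (wordMap f t (wordMap f v (y n₁)))
      ≤ dist ((wordMap f u)^[k] (x s)) ((wordMap f u)^[k] (y n₁)) := by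
        rw [← wordMap_flatten_replicate]
        exact dist_wordMap_le hf t _ _
    _ ≤ K ^ k * dist (x s) (y n₁) := by
        exact_mod_cast (hu.iterate k).dist_le_mul _ _
    _ ≤ K ^ k * D := by gcongr; exact hD s n₁
    _ < ε := hk

end IFS

theorem stmt_6_general {X : Type*} [MetricSpace X] {N : ℕ}
    (f : Fin N → X → X)
    (hf : ∀ (i : Fin N) (a b : X), dist (f i a) (f i b) ≤ dist a b)
    (C : Set X) (hCne : C.Nonempty)
    (hCbdd : Bornology.IsBounded C) (hCsub : (⋃ i : Fin N, f i '' C) ⊆ C)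
    (x y : ℕ → X) (σ τ : ℕ → Fin N)
    (hx : ∀ n : ℕ, x (n + 1) = f (σ n) (x n))
    (hy : ∀ n : ℕ, y (n + 1) = f (τ n) (y n))
    (hσ : Disjunctive σ) (hτ : Disjunctive τ)
    (hcontr : ∃ (u : List (Fin N)) (L : ℝ), u ≠ [] ∧ 0 ≤ L ∧ L < 1 ∧
      ∀ a b : X, dist (wordMap f u a) (wordMap f u b) ≤ L * dist a b) :
    omegaLimitSet x = omegaLimitSet y := by
  obtain ⟨u, L, -, hL0, hL1, hLu⟩ := hcontr
  have hu : LipschitzWith ⟨L, hL0⟩ (wordMap f u) := LipschitzWith.of_dist_le_mul hLu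
  have hK : (⟨L, hL0⟩ : NNReal) < 1 := hL1
  obtain ⟨D, hD⟩ := Metric.isBounded_iff.1 <|
    (isBounded_range_orbit hf hCne hCbdd hCsub hx).union
      (isBounded_range_orbit hf hCne hCbdd hCsub hy)
  have hxy : ∀ a b, dist (x a) (y b) ≤ D := fun a b =>
    hD (.inl ⟨a, rfl⟩) (.inr ⟨b, rfl⟩)
  have hyx : ∀ a b, dist (y a) (x b) ≤ D := fun a b => dist_comm (y a) (x b) ▸ hxy b a
  exact (omegaLimitSet_subset_of_eventually_close fun ε hε =>
      eventually_exists_dist_orbit_lt hf hx hy hσ hτ hu hK hxy hε).antisymm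
    (omegaLimitSet_subset_of_eventually_close fun ε hε =>
      eventually_exists_dist_orbit_lt hf hy hx hτ hσ hu hK hyx hε)

/-- For a nonexpansive IFS on a complete metric space possessing a
nonempty closed bounded subinvariant set, under condition (C) (some finite
composition of the maps is a Lipschitz contraction), any two orbits driven by
disjunctive sequences have the same omega-limit set. -/
theorem stmt_6 {X : Type*} [MetricSpace X] [CompleteSpace X] {N : ℕ}
    (f : Fin N → X → X)
    (hf : ∀ (i : Fin N) (a b : X), dist (f i a) (f i b) ≤ dist a b)
    (C : Set X) (hCne : C.Nonempty) (hCclosed : IsClosed C)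
    (hCbdd : Bornology.IsBounded C) (hCsub : (⋃ i : Fin N, f i '' C) ⊆ C)
    (x y : ℕ → X) (σ τ : ℕ → Fin N)
    (hx : ∀ n : ℕ, x (n + 1) = f (σ n) (x n))
    (hy : ∀ n : ℕ, y (n + 1) = f (τ n) (y n))
    (hσ : Disjunctive σ) (hτ : Disjunctive τ)
    (hcontr : ∃ (u : List (Fin N)) (L : ℝ), u ≠ [] ∧ 0 ≤ L ∧ L < 1 ∧
      ∀ a b : X, dist (wordMap f u a) (wordMap f u b) ≤ L * dist a b) :
    omegaLimitSet x = omegaLimitSet y :=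
  stmt_6_general f hf C hCne hCbdd hCsub x y σ τ hx hy hσ hτ hcontr
end
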